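/- Let ⋆ be a continuous t-norm on I = [0,1] and △ a continuous binary operation on I. Then △ is a t-conorm on I if and only if the convolution ⋏ defined by (f ⋏ g)(x) = sup{f(y) ⋆ g(z) : y △ z = x} is a t-conorm on L. -/
import Mathlib


open unitInterval

noncomputable section

instance : Fact ((0:ℝ) ≤ 1) := ⟨zero_le_one⟩

/-- A function `f : I → I` is normal if `sup {f x : x ∈ I} = 1`. -/
def IsNormal (f : I → I) : Prop := sSup (Set.range f) = 1

/-- A function `f : I → I` is convex if `f y ≥ min (f x) (f z)` whenever `x ≤ y ≤ z`. -/
def IsConvexFn (f : I → I) : Prop :=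
  ∀ x y z : I, x ≤ y → y ≤ z → min (f x) (f z) ≤ f y

/-- Membership in `L`, the set of normal convex functions from `I` to `I`. -/
def InL (f : I → I) : Prop := IsNormal f ∧ IsConvexFn f

/-- A t-norm on `I`: commutative, associative, increasing in each argument,
with neutral element `1`. -/
def IsTnorm (op : I → I → I) : Prop :=
  (∀ x y : I, op x y = op y x) ∧
  (∀ x y z : I, op (op x y) z = op x (op y z)) ∧
  (∀ y : I, Monotone fun x => op x y) ∧
  (∀ x : I, Monotone fun y => op x y) ∧
  (∀ x : I, op 1 x = x) ∧ (∀ x : I, op x 1 = x)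

/-- A t-conorm on `I`: commutative, associative, increasing in each argument,
with neutral element `0`. -/
def IsTconorm (op : I → I → I) : Prop :=
  (∀ x y : I, op x y = op y x) ∧
  (∀ x y z : I, op (op x y) z = op x (op y z)) ∧
  (∀ y : I, Monotone fun x => op x y) ∧
  (∀ x : I, Monotone fun y => op x y) ∧
  (∀ x : I, op 0 x = x) ∧ (∀ x : I, op x 0 = x)

/-- Continuity of a binary operation on `I`, as a map `I × I → I`. -/
def IsCont (op : I → I → I) : Prop := Continuous fun p : I × I => op p.1 p.2

/-- The convolution `(f ⋏ g)(x) = sup {f y ⋆ g z : y △ z = x}` (`star` playing the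
role of `⋆` and `tri` the role of `△`); the sup of the empty set is `0`. -/
def conv (star tri : I → I → I) (f g : I → I) : I → I :=
  fun x => sSup {a : I | ∃ y z : I, tri y z = x ∧ a = star (f y) (g z)}

/-- The meet `(f ⊓ g)(x) = sup {min (f y) (g z) : min y z = x}`. -/
def fmeet (f g : I → I) : I → I :=
  fun x => sSup {a : I | ∃ y z : I, min y z = x ∧ a = min (f y) (g z)}

/-- The partial order `f ⊑ g` iff `f ⊓ g = f`. -/
def sqle (f g : I → I) : Prop := fmeet f g = f

/-- The characteristic function `χ_{x}` of the singleton `{x}`. -/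
def chi (x : I) : I → I := fun t => if t = x then 1 else 0

/-- A binary operation `C` on functions is a t-norm on `L` if `L` is closed under `C` and,
on `L`, `C` is commutative, associative, has `χ_{1}` as neutral element, and is increasing
in each argument with respect to `⊑`. -/
def IsTnormOnL (C : (I → I) → (I → I) → (I → I)) : Prop :=
  (∀ f g, InL f → InL g → InL (C f g)) ∧
  (∀ f g, InL f → InL g → C f g = C g f) ∧
  (∀ f g h, InL f → InL g → InL h → C (C f g) h = C f (C g h)) ∧
  (∀ f, InL f → C f (chi 1) = f) ∧
  (∀ f g h, InL f → InL g → InL h → sqle g h → sqle (C f g) (C f h))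

/-- A binary operation `C` on functions is a t-conorm on `L` if `L` is closed under `C` and,
on `L`, `C` is commutative, associative, has `χ_{0}` as neutral element, and is increasing
in each argument with respect to `⊑`. -/
def IsTconormOnL (C : (I → I) → (I → I) → (I → I)) : Prop :=
  (∀ f g, InL f → InL g → InL (C f g)) ∧
  (∀ f g, InL f → InL g → C f g = C g f) ∧
  (∀ f g h, InL f → InL g → InL h → C (C f g) h = C f (C g h)) ∧
  (∀ f, InL f → C f (chi 0) = f) ∧
  (∀ f g h, InL f → InL g → InL h → sqle g h → sqle (C f g) (C f h))

/-- `f^L (x) = sup {f y : y ≤ x}`. -/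
def fL (f : I → I) : I → I := fun x => sSup (f '' Set.Iic x)

/-- `f^R (x) = sup {f y : y ≥ x}`. -/
def fR (f : I → I) : I → I := fun x => sSup (f '' Set.Ici x)

/-- The function `V_x (t) = (x - 1) * t + 1`. -/
def Vfn (x : I) : I → I := fun t =>
  ⟨(x.1 - 1) * t.1 + 1, by
    obtain ⟨hx0, hx1⟩ := x.2; obtain ⟨ht0, ht1⟩ := t.2
    constructor <;> nlinarith⟩

section AuxBasic

lemma I_bot_eq : (⊥ : I) = 0 := rfl

lemma lt_sSup_witness {S : Set I} {c : I} (h : c < sSup S) : ∃ a ∈ S, c < a := by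
  by_contra hc
  push_neg at hc
  exact absurd (sSup_le hc) (not_le.mpr h)

/-- A monotone continuous function on `I` maps sups of nonempty sets to sups. -/
lemma map_sSup_of_continuous {h : I → I} (hm : Monotone h) (hc : Continuous h)
    {S : Set I} (hS : S.Nonempty) : h (sSup S) = sSup (h '' S) := by
  refine le_antisymm ?_ (sSup_le ?_)
  · by_contra hlt
    push_neg at hlt
    set s := sSup S with hs
    set c := sSup (h '' S) with hcdef
    have hcs : (c : ℝ) < h s := hlt
    obtain ⟨δ, hδpos, hball⟩ :=
      Metric.continuousAt_iff.mp hc.continuousAt ((h s : ℝ) - c) (by linarith)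
    -- find a ∈ S with (s:ℝ) - δ < a
    have hex : ∃ a ∈ S, (s : ℝ) - δ < a := by
      by_contra hno
      push_neg at hno
      obtain ⟨a0, ha0⟩ := hS
      have h0 : (0:ℝ) ≤ (a0 : ℝ) := a0.2.1
      have hsd : (0:ℝ) ≤ (s:ℝ) - δ := le_trans h0 (hno a0 ha0)
      have hu : ∀ a ∈ S, a ≤ (⟨(s:ℝ) - δ, ⟨hsd, by
          have := s.2.2; linarith⟩⟩ : I) := by
        intro a ha
        exact Subtype.coe_le_coe.mp (by simpa using hno a ha)
      have := sSup_le hu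
      rw [← hs] at this
      have : (s : ℝ) ≤ (s:ℝ) - δ := this
      linarith
    obtain ⟨a, haS, ha⟩ := hex
    have hale : a ≤ s := le_sSup haS
    have hdist : dist a s < δ := by
      rw [Subtype.dist_eq, Real.dist_eq, abs_lt]
      constructor <;> [linarith [Subtype.coe_le_coe.mpr hale]; linarith [Subtype.coe_le_coe.mpr hale]]
    have h2 := hball hdist
    rw [Subtype.dist_eq, Real.dist_eq, abs_lt] at h2
    have hha : h a ≤ h s := hm hale
    have hhc : h a ≤ c := le_sSup ⟨a, haS, rfl⟩
    have : (h a : ℝ) ≤ c := hhc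
    have : (h s : ℝ) - h a < h s - c := by linarith
    have hcontr : (c : ℝ) < h a := by linarith [h2.1]
    linarith
  · rintro b ⟨a, ha, rfl⟩
    exact hm (le_sSup ha)

/-- Intermediate value theorem on `I`, packaged with a convexity bound. -/
lemma ivt_btw {φ : I → I} (hφ : Continuous φ) {f : I → I} (hf : IsConvexFn f) {a b c : I}
    (h1 : φ a ≤ c) (h2 : c ≤ φ b) : ∃ t : I, φ t = c ∧ min (f a) (f b) ≤ f t := by
  set Φ : ℝ → ℝ := fun r => (φ (Set.projIcc 0 1 zero_le_one r) : ℝ) with hΦdef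
  have hΦ : Continuous Φ :=
    continuous_subtype_val.comp (hφ.comp continuous_projIcc)
  have hΦa : Φ (a : ℝ) = (φ a : ℝ) := by rw [hΦdef]; simp [Set.projIcc_val]
  have hΦb : Φ (b : ℝ) = (φ b : ℝ) := by rw [hΦdef]; simp [Set.projIcc_val]
  rcases le_total a b with hab | hab
  · have hsub := intermediate_value_Icc (Subtype.coe_le_coe.mpr hab) hΦ.continuousOn
    have hcmem : (c : ℝ) ∈ Set.Icc (Φ (a:ℝ)) (Φ (b:ℝ)) := by
      rw [hΦa, hΦb]; exact ⟨h1, h2⟩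
    obtain ⟨r, hr, hrc⟩ := hsub hcmem
    set t := Set.projIcc (0:ℝ) 1 zero_le_one r with ht
    have hat : a ≤ t := by
      rw [ht, ← Set.projIcc_val zero_le_one a]
      exact Set.monotone_projIcc zero_le_one hr.1
    have htb : t ≤ b := by
      rw [ht, ← Set.projIcc_val zero_le_one b]
      exact Set.monotone_projIcc zero_le_one hr.2
    exact ⟨t, Subtype.coe_inj.mp hrc, hf a t b hat htb⟩
  · have hsub := intermediate_value_Icc' (Subtype.coe_le_coe.mpr hab) hΦ.continuousOn
    have hcmem : (c : ℝ) ∈ Set.Icc (Φ (a:ℝ)) (Φ (b:ℝ)) := by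
      rw [hΦa, hΦb]; exact ⟨h1, h2⟩
    obtain ⟨r, hr, hrc⟩ := hsub hcmem
    set t := Set.projIcc (0:ℝ) 1 zero_le_one r with ht
    have hbt : b ≤ t := by
      rw [ht, ← Set.projIcc_val zero_le_one b]
      exact Set.monotone_projIcc zero_le_one hr.1
    have hta : t ≤ a := by
      rw [ht, ← Set.projIcc_val zero_le_one a]
      exact Set.monotone_projIcc zero_le_one hr.2
    exact ⟨t, Subtype.coe_inj.mp hrc, (min_comm (f a) (f b)) ▸ hf b t a hbt hta⟩

end AuxBasic

section AuxOps

variable {star tri : I → I → I}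

lemma star_mono_l (hstar : IsTnorm star) {a b : I} (h : a ≤ b) (c : I) :
    star a c ≤ star b c := hstar.2.2.1 c h

lemma star_mono_r (hstar : IsTnorm star) (c : I) {a b : I} (h : a ≤ b) :
    star c a ≤ star c b := hstar.2.2.2.1 c h

lemma my_star_one (hstar : IsTnorm star) (a : I) : star a 1 = a := hstar.2.2.2.2.2 a

lemma one_star (hstar : IsTnorm star) (a : I) : star 1 a = a := hstar.2.2.2.2.1 a

lemma my_star_zero (hstar : IsTnorm star) (a : I) : star a 0 = 0 := by
  refine le_antisymm ?_ bot_le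
  calc star a 0 ≤ star 1 0 := star_mono_l hstar le_one' 0
  _ = 0 := one_star hstar 0

lemma zero_star (hstar : IsTnorm star) (a : I) : star 0 a = 0 := by
  refine le_antisymm ?_ bot_le
  calc star 0 a ≤ star 0 1 := star_mono_r hstar 0 le_one'
  _ = 0 := my_star_one hstar 0

lemma star_le_left (hstar : IsTnorm star) (a b : I) : star a b ≤ a := by
  calc star a b ≤ star a 1 := star_mono_r hstar a le_one'
  _ = a := my_star_one hstar a

lemma star_le_right (hstar : IsTnorm star) (a b : I) : star a b ≤ b := by
  calc star a b ≤ star 1 b := star_mono_l hstar le_one' b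
  _ = b := one_star hstar b

lemma star_min_left (hstar : IsTnorm star) (u v w : I) :
    star (min u v) w = min (star u w) (star v w) := by
  rcases le_total u v with h | h
  · rw [min_eq_left h, min_eq_left (star_mono_l hstar h w)]
  · rw [min_eq_right h, min_eq_right (star_mono_l hstar h w)]

lemma star_min_right (hstar : IsTnorm star) (u v w : I) :
    star w (min u v) = min (star w u) (star w v) := by
  rcases le_total u v with h | h
  · rw [min_eq_left h, min_eq_left (star_mono_r hstar w h)]
  · rw [min_eq_right h, min_eq_right (star_mono_r hstar w h)]

lemma tri_mono_l (htri : IsTconorm tri) {a b : I} (h : a ≤ b) (c : I) :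
    tri a c ≤ tri b c := htri.2.2.1 c h

lemma tri_mono_r (htri : IsTconorm tri) (c : I) {a b : I} (h : a ≤ b) :
    tri c a ≤ tri c b := htri.2.2.2.1 c h

lemma tri_zero (htri : IsTconorm tri) (a : I) : tri a 0 = a := htri.2.2.2.2.2 a

lemma zero_tri (htri : IsTconorm tri) (a : I) : tri 0 a = a := htri.2.2.2.2.1 a

lemma tri_one_one (htri : IsTconorm tri) : tri 1 1 = 1 :=
  le_antisymm le_one' (le_trans (le_of_eq (tri_zero htri 1).symm) (tri_mono_r htri 1 bot_le))

lemma cont_sec_l (hc : IsCont star) (z : I) : Continuous fun y => star y z :=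
  hc.comp (continuous_id.prodMk continuous_const)

lemma cont_sec_r (hc : IsCont star) (y : I) : Continuous fun z => star y z :=
  hc.comp (continuous_const.prodMk continuous_id)

/-- Every point of `I` is in the image of a continuous t-conorm. -/
lemma tri_surj (htri : IsTconorm tri) (htric : IsCont tri) (x : I) :
    ∃ p q : I, tri p q = x := by
  have hφ : Continuous fun t : I => tri t t :=
    htric.comp (continuous_id.prodMk continuous_id)
  have h0 : tri 0 0 = 0 := tri_zero htri 0
  have hconv : IsConvexFn (fun _ : I => (0:I)) := fun _ _ _ _ _ => by simp
  obtain ⟨t, ht, -⟩ := ivt_btw hφ hconv (a := 0) (b := 1) (c := x)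
    (by rw [h0]; exact bot_le) (by rw [tri_one_one htri]; exact le_one')
  exact ⟨t, t, ht⟩

end AuxOps

section ConvBasic

variable {star tri : I → I → I}

lemma le_conv {f g : I → I} {x y z : I} (h : tri y z = x) :
    star (f y) (g z) ≤ conv star tri f g x := le_sSup ⟨y, z, h, rfl⟩

lemma conv_le {f g : I → I} {x c : I}
    (h : ∀ y z : I, tri y z = x → star (f y) (g z) ≤ c) :
    conv star tri f g x ≤ c := by
  apply sSup_le
  rintro b ⟨y, z, hyz, rfl⟩
  exact h y z hyz

/-- The key lemma: values of the convolution dominate mins of straddling decompositions. -/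
lemma key_conv (hstar : IsTnorm star) (htri : IsTconorm tri) (htric : IsCont tri)
    {f g : I → I} (hf : IsConvexFn f) (hg : IsConvexFn g)
    {y1 z1 y2 z2 x : I} (h1 : tri y1 z1 ≤ x) (h2 : x ≤ tri y2 z2) :
    min (star (f y1) (g z1)) (star (f y2) (g z2)) ≤ conv star tri f g x := by
  set a := star (f y1) (g z1) with ha
  set b := star (f y2) (g z2) with hb
  by_contra hcon
  push_neg at hcon
  set C := conv star tri f g x with hC
  -- corner (y2, z1) analysis: in both cases star (f y2) (g z1) < min a b
  have hs21 : star (f y2) (g z1) < min a b := by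
    rcases le_total x (tri y2 z1) with hx | hx
    · -- IVT in first coordinate between y1 and y2
      obtain ⟨t, htc, hmin⟩ := ivt_btw (φ := fun t => tri t z1)
        (htric.comp (continuous_id.prodMk continuous_const)) hf h1 hx
      have hle : star (f t) (g z1) ≤ C := le_conv htc
      have hge : min (star (f y1) (g z1)) (star (f y2) (g z1)) ≤ star (f t) (g z1) := by
        rw [← star_min_left hstar]
        exact star_mono_l hstar hmin (g z1)
      have : min a (star (f y2) (g z1)) < min a b := lt_of_le_of_lt (hge.trans hle) hcon
      by_contra hnot
      push_neg at hnot
      exact absurd (le_min (min_le_left _ _) (hnot) : min a (star (f y2) (g z1)) ≥ min a b) (not_le.mpr this)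
    · -- IVT in second coordinate between z1 and z2
      obtain ⟨t, htc, hmin⟩ := ivt_btw (φ := fun t => tri y2 t)
        (htric.comp (continuous_const.prodMk continuous_id)) hg hx h2
      have hle : star (f y2) (g t) ≤ C := le_conv htc
      have hge : min (star (f y2) (g z1)) (star (f y2) (g z2)) ≤ star (f y2) (g t) := by
        rw [← star_min_right hstar]
        exact star_mono_r hstar (f y2) hmin
      have : min (star (f y2) (g z1)) b < min a b := lt_of_le_of_lt (hge.trans hle) hcon
      by_contra hnot
      push_neg at hnot
      exact absurd (le_min hnot (min_le_right a b) : min a b ≤ min (star (f y2) (g z1)) b) (not_le.mpr this)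
  -- corner (y1, z2) analysis
  have hs12 : star (f y1) (g z2) < min a b := by
    rcases le_total x (tri y1 z2) with hx | hx
    · obtain ⟨t, htc, hmin⟩ := ivt_btw (φ := fun t => tri y1 t)
        (htric.comp (continuous_const.prodMk continuous_id)) hg h1 hx
      have hle : star (f y1) (g t) ≤ C := le_conv htc
      have hge : min (star (f y1) (g z1)) (star (f y1) (g z2)) ≤ star (f y1) (g t) := by
        rw [← star_min_right hstar]
        exact star_mono_r hstar (f y1) hmin
      have : min a (star (f y1) (g z2)) < min a b := lt_of_le_of_lt (hge.trans hle) hcon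
      by_contra hnot
      push_neg at hnot
      exact absurd (le_min (min_le_left _ _) (hnot) : min a (star (f y1) (g z2)) ≥ min a b) (not_le.mpr this)
    · obtain ⟨t, htc, hmin⟩ := ivt_btw (φ := fun t => tri t z2)
        (htric.comp (continuous_id.prodMk continuous_const)) hf hx h2
      have hle : star (f t) (g z2) ≤ C := le_conv htc
      have hge : min (star (f y1) (g z2)) (star (f y2) (g z2)) ≤ star (f t) (g z2) := by
        rw [← star_min_left hstar]
        exact star_mono_l hstar hmin (g z2)
      have : min (star (f y1) (g z2)) b < min a b := lt_of_le_of_lt (hge.trans hle) hcon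
      by_contra hnot
      push_neg at hnot
      exact absurd (le_min hnot (min_le_right a b) : min a b ≤ min (star (f y1) (g z2)) b) (not_le.mpr this)
  -- contradiction via monotonicity
  have hgz : g z1 < g z2 := by
    by_contra hno
    push_neg at hno
    exact absurd (star_mono_r hstar (f y2) hno : b ≤ star (f y2) (g z1))
      (not_le.mpr (lt_of_lt_of_le hs21 (min_le_right a b)))
  have hgz' : g z2 < g z1 := by
    by_contra hno
    push_neg at hno
    exact absurd (star_mono_r hstar (f y1) hno : a ≤ star (f y1) (g z2))
      (not_le.mpr (lt_of_lt_of_le hs12 (min_le_left a b)))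
  exact absurd hgz (not_lt.mpr (le_of_lt hgz'))

end ConvBasic

section LRfacts

lemma f_le_fL (f : I → I) {t x : I} (h : t ≤ x) : f t ≤ fL f x :=
  le_sSup ⟨t, h, rfl⟩

lemma f_le_fR (f : I → I) {t x : I} (h : x ≤ t) : f t ≤ fR f x :=
  le_sSup ⟨t, h, rfl⟩

lemma fL_mono (f : I → I) : Monotone (fL f) := by
  intro x y hxy
  apply sSup_le
  rintro b ⟨t, ht, rfl⟩
  exact f_le_fL f (le_trans ht hxy)

lemma fR_anti (f : I → I) : Antitone (fR f) := by
  intro x y hxy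
  apply sSup_le
  rintro b ⟨t, ht, rfl⟩
  exact f_le_fR f (le_trans hxy ht)

lemma min_fL_fR_le {f : I → I} (hf : IsConvexFn f) (x : I) :
    min (fL f x) (fR f x) ≤ f x := by
  by_contra hcon
  push_neg at hcon
  obtain ⟨_, ⟨t, ht, rfl⟩, htgt⟩ := lt_sSup_witness (lt_of_lt_of_le hcon (min_le_left _ _))
  obtain ⟨_, ⟨s, hs, rfl⟩, hsgt⟩ := lt_sSup_witness (lt_of_lt_of_le hcon (min_le_right _ _))
  exact absurd (hf t x s ht hs) (not_le.mpr (lt_min htgt hsgt))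

lemma convex_of_minLR {f : I → I} (h : ∀ x, min (fL f x) (fR f x) ≤ f x) :
    IsConvexFn f := by
  intro x y z hxy hyz
  exact le_trans (min_le_min (f_le_fL f hxy) (f_le_fR f hyz)) (h y)

lemma fL_sup_fR {f : I → I} (hn : IsNormal f) (x : I) : max (fL f x) (fR f x) = 1 := by
  have : fL f x ⊔ fR f x = sSup (f '' Set.Iic x ∪ f '' Set.Ici x) := (sSup_union).symm
  rw [this, ← Set.image_union]
  have hcover : Set.Iic x ∪ Set.Ici x = Set.univ := by
    ext t; simp [le_total t x]
  rw [hcover, Set.image_univ]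
  exact hn

end LRfacts

section Closure

variable {star tri : I → I → I}

lemma conv_normal (hstar : IsTnorm star) (hstarc : IsCont star)
    {f g : I → I} (hfn : IsNormal f) (hgn : IsNormal g) :
    IsNormal (conv star tri f g) := by
  set s := sSup (Set.range (conv star tri f g)) with hs
  refine le_antisymm le_one' ?_
  have hfy : ∀ y : I, f y ≤ s := by
    intro y
    have h1 : star (f y) (sSup (Set.range g)) = sSup ((fun z => star (f y) z) '' Set.range g) :=
      map_sSup_of_continuous (hstar.2.2.2.1 (f y)) (cont_sec_r hstarc (f y)) (Set.range_nonempty g)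
    have h2 : star (f y) (sSup (Set.range g)) ≤ s := by
      rw [h1]
      apply sSup_le
      rintro b ⟨_, ⟨z, rfl⟩, rfl⟩
      exact le_trans (le_conv rfl) (le_sSup ⟨tri y z, rfl⟩)
    rw [hgn, my_star_one hstar] at h2
    exact h2
  calc (1:I) = sSup (Set.range f) := hfn.symm
  _ ≤ s := sSup_le (by rintro b ⟨y, rfl⟩; exact hfy y)

lemma conv_convex (hstar : IsTnorm star) (htri : IsTconorm tri) (htric : IsCont tri)
    {f g : I → I} (hf : IsConvexFn f) (hg : IsConvexFn g) :
    IsConvexFn (conv star tri f g) := by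
  apply convex_of_minLR
  intro x
  by_contra hcon
  push_neg at hcon
  obtain ⟨_, ⟨x1, hx1, rfl⟩, h1⟩ := lt_sSup_witness (lt_of_lt_of_le hcon (min_le_left _ _))
  obtain ⟨_, ⟨x2, hx2, rfl⟩, h2⟩ := lt_sSup_witness (lt_of_lt_of_le hcon (min_le_right _ _))
  obtain ⟨a1, ⟨y1, z1, hyz1, rfl⟩, ha1⟩ := lt_sSup_witness h1
  obtain ⟨a2, ⟨y2, z2, hyz2, rfl⟩, ha2⟩ := lt_sSup_witness h2
  have hk := key_conv hstar htri htric hf hg (x := x)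
    (le_of_eq_of_le hyz1 hx1) (le_of_le_of_eq hx2 hyz2.symm)
  exact absurd hk (not_le.mpr (lt_min ha1 ha2))

lemma conv_inL (hstar : IsTnorm star) (hstarc : IsCont star)
    (htri : IsTconorm tri) (htric : IsCont tri)
    {f g : I → I} (hf : InL f) (hg : InL g) : InL (conv star tri f g) :=
  ⟨conv_normal hstar hstarc hf.1 hg.1, conv_convex hstar htri htric hf.2 hg.2⟩

end Closure

section ConvAlg

variable {star tri : I → I → I}

lemma conv_comm (hstar : IsTnorm star) (htc : ∀ x y : I, tri x y = tri y x)
    (f g : I → I) : conv star tri f g = conv star tri g f := by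
  funext x
  show sSup _ = sSup _
  congr 1
  ext a
  constructor
  · rintro ⟨y, z, hyz, rfl⟩
    exact ⟨z, y, (htc z y).trans hyz, hstar.1 (f y) (g z)⟩
  · rintro ⟨y, z, hyz, rfl⟩
    exact ⟨z, y, (htc z y).trans hyz, hstar.1 (g y) (f z)⟩

lemma conv_chi_zero (hstar : IsTnorm star) (htri : IsTconorm tri) (f : I → I) :
    conv star tri f (chi 0) = f := by
  funext x
  apply le_antisymm
  · apply conv_le
    intro y z hyz
    by_cases hz : z = (0:I)
    · subst hz
      have hyx : y = x := by rw [← tri_zero htri y]; exact hyz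
      subst hyx
      have : chi 0 (0:I) = 1 := by simp [chi]
      rw [this, my_star_one hstar]
    · have : chi 0 z = 0 := by simp [chi, hz]
      rw [this, my_star_zero hstar]
      exact bot_le
  · have hmem : f x ∈ {a : I | ∃ y z : I, tri y z = x ∧ a = star (f y) (chi 0 z)} := by
      refine ⟨x, 0, tri_zero htri x, ?_⟩
      have : chi 0 (0:I) = 1 := by simp [chi]
      rw [this, my_star_one hstar]
    exact le_sSup hmem

lemma conv_assoc (hstar : IsTnorm star) (hstarc : IsCont star)
    (htri : IsTconorm tri) (htric : IsCont tri) (f g k : I → I) :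
    conv star tri (conv star tri f g) k = conv star tri f (conv star tri g k) := by
  funext x
  apply le_antisymm
  · apply conv_le
    intro u w huw
    have hne : {a : I | ∃ y z : I, tri y z = u ∧ a = star (f y) (g z)}.Nonempty := by
      obtain ⟨p, q, hpq⟩ := tri_surj htri htric u
      exact ⟨_, ⟨p, q, hpq, rfl⟩⟩
    have hmap := map_sSup_of_continuous (hstar.2.2.1 (k w)) (cont_sec_l hstarc (k w)) hne
    show star (sSup {a : I | ∃ y z : I, tri y z = u ∧ a = star (f y) (g z)}) (k w) ≤ _
    rw [hmap]
    apply sSup_le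
    rintro _ ⟨_, ⟨p, q, hpq, rfl⟩, rfl⟩
    show star (star (f p) (g q)) (k w) ≤ _
    rw [hstar.2.1 (f p) (g q) (k w)]
    have h1 : star (g q) (k w) ≤ conv star tri g k (tri q w) := le_conv rfl
    have h2 : tri p (tri q w) = x := by rw [← htri.2.1 p q w, hpq, huw]
    exact le_trans (star_mono_r hstar (f p) h1) (le_conv h2)
  · apply conv_le
    intro u w huw
    have hne : {a : I | ∃ y z : I, tri y z = w ∧ a = star (g y) (k z)}.Nonempty := by
      obtain ⟨p, q, hpq⟩ := tri_surj htri htric w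
      exact ⟨_, ⟨p, q, hpq, rfl⟩⟩
    have hmap := map_sSup_of_continuous (hstar.2.2.2.1 (f u)) (cont_sec_r hstarc (f u)) hne
    show star (f u) (sSup {a : I | ∃ y z : I, tri y z = w ∧ a = star (g y) (k z)}) ≤ _
    rw [hmap]
    apply sSup_le
    rintro _ ⟨_, ⟨q, r, hqr, rfl⟩, rfl⟩
    show star (f u) (star (g q) (k r)) ≤ _
    rw [← hstar.2.1 (f u) (g q) (k r)]
    have h1 : star (f u) (g q) ≤ conv star tri f g (tri u q) := le_conv rfl
    have h2 : tri (tri u q) r = x := by rw [htri.2.1 u q r, hqr, huw]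
    exact le_trans (star_mono_l hstar h1 (k r)) (le_conv h2)

end ConvAlg

section Pairs

variable {star tri : I → I → I}

lemma convex_const_zero : IsConvexFn (fun _ : I => (0:I)) := fun _ _ _ _ _ => by simp

lemma ivt_simple {φ : I → I} (hφ : Continuous φ) {a b c : I}
    (h1 : φ a ≤ c) (h2 : c ≤ φ b) : ∃ t : I, φ t = c := by
  obtain ⟨t, ht, -⟩ := ivt_btw hφ convex_const_zero h1 h2
  exact ⟨t, ht⟩

lemma cont_mul_right (y : I) : Continuous fun t : I => t * y := by
  apply Continuous.subtype_mk
  exact continuous_subtype_val.mul continuous_const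

lemma symm_anti {x y : I} (h : x ≤ y) : symm y ≤ symm x :=
  Subtype.coe_le_coe.mp (by
    rw [coe_symm_eq, coe_symm_eq]
    have := Subtype.coe_le_coe.mpr h
    linarith)

lemma exists_le_pair (htri : IsTconorm tri) (htric : IsCont tri) {x y z : I}
    (h : x ≤ tri y z) : ∃ p q : I, p ≤ y ∧ q ≤ z ∧ tri p q = x := by
  have hc : Continuous fun t : I => tri (t * y) (t * z) :=
    htric.comp ((cont_mul_right y).prodMk (cont_mul_right z))
  have hzy : (0:I) * y = 0 := Subtype.ext (by show (0:ℝ) * (y:ℝ) = 0; ring)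
  have hzz : (0:I) * z = 0 := Subtype.ext (by show (0:ℝ) * (z:ℝ) = 0; ring)
  have hoy : (1:I) * y = y := Subtype.ext (by show (1:ℝ) * (y:ℝ) = (y:ℝ); ring)
  have hoz : (1:I) * z = z := Subtype.ext (by show (1:ℝ) * (z:ℝ) = (z:ℝ); ring)
  have h0 : tri ((0:I) * y) ((0:I) * z) ≤ x := by
    rw [hzy, hzz, tri_zero htri]; exact bot_le
  have h1 : x ≤ tri ((1:I) * y) ((1:I) * z) := by rw [hoy, hoz]; exact h
  obtain ⟨t, ht⟩ := ivt_simple hc h0 h1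
  exact ⟨t * y, t * z, mul_le_right, mul_le_right, ht⟩

lemma exists_ge_pair (htri : IsTconorm tri) (htric : IsCont tri) {x y z : I}
    (h : tri y z ≤ x) : ∃ p q : I, y ≤ p ∧ z ≤ q ∧ tri p q = x := by
  set P : I → I → I := fun w t => symm (symm w * symm t) with hP
  have hPc : ∀ w : I, Continuous fun t => P w t := by
    intro w
    apply continuous_symm.comp
    apply Continuous.subtype_mk
    exact continuous_const.mul (continuous_subtype_val.comp continuous_symm)
  have hP0 : ∀ w : I, P w 0 = w := by
    intro w
    show symm (symm w * symm 0) = w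
    rw [symm_zero]
    have : symm w * 1 = symm w := Subtype.ext (by show (symm w : ℝ) * 1 = (symm w : ℝ); ring)
    rw [this, symm_symm]
  have hP1 : ∀ w : I, P w 1 = 1 := by
    intro w
    show symm (symm w * symm 1) = 1
    rw [symm_one]
    have : symm w * 0 = (0:I) := Subtype.ext (by show (symm w : ℝ) * 0 = (0:ℝ); ring)
    rw [this, symm_zero]
  have hPge : ∀ w t : I, w ≤ P w t := by
    intro w t
    have h1 : symm w * symm t ≤ symm w := mul_le_left
    have := symm_anti h1
    rwa [symm_symm] at this
  have hc : Continuous fun t : I => tri (P y t) (P z t) :=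
    htric.comp ((hPc y).prodMk (hPc z))
  have h0 : tri (P y 0) (P z 0) ≤ x := by rw [hP0, hP0]; exact h
  have h1 : x ≤ tri (P y 1) (P z 1) := by rw [hP1, hP1, tri_one_one htri]; exact le_one'
  obtain ⟨t, ht⟩ := ivt_simple hc h0 h1
  exact ⟨P y t, P z t, hPge y t, hPge z t, ht⟩

end Pairs

section ConvLR

variable {star tri : I → I → I}

lemma convR_eq (hstar : IsTnorm star) (hstarc : IsCont star)
    (htri : IsTconorm tri) (htric : IsCont tri) (f g : I → I) (x : I) :
    fR (conv star tri f g) x = conv star tri (fR f) (fR g) x := by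
  apply le_antisymm
  · apply sSup_le
    rintro _ ⟨x', hx', rfl⟩
    apply conv_le
    intro y z hyz
    obtain ⟨p, q, hpy, hqz, hpq⟩ := exists_le_pair htri htric (le_trans hx' (le_of_eq hyz.symm))
    calc star (f y) (g z) ≤ star (fR f p) (fR g q) :=
          le_trans (star_mono_l hstar (f_le_fR f hpy) (g z))
            (star_mono_r hstar (fR f p) (f_le_fR g hqz))
    _ ≤ conv star tri (fR f) (fR g) x := le_conv hpq
  · apply conv_le
    intro p q hpq
    have hne1 : (g '' Set.Ici q).Nonempty := ⟨g q, q, le_refl q, rfl⟩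
    have hmap1 := map_sSup_of_continuous (hstar.2.2.2.1 (fR f p)) (cont_sec_r hstarc (fR f p)) hne1
    show star (fR f p) (sSup (g '' Set.Ici q)) ≤ _
    rw [hmap1]
    apply sSup_le
    rintro _ ⟨_, ⟨z, hz, rfl⟩, rfl⟩
    have hne2 : (f '' Set.Ici p).Nonempty := ⟨f p, p, le_refl p, rfl⟩
    have hmap2 := map_sSup_of_continuous (hstar.2.2.1 (g z)) (cont_sec_l hstarc (g z)) hne2
    show star (sSup (f '' Set.Ici p)) (g z) ≤ _
    rw [hmap2]
    apply sSup_le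
    rintro _ ⟨_, ⟨y, hy, rfl⟩, rfl⟩
    have hxle : x ≤ tri y z := by
      rw [← hpq]
      exact le_trans (tri_mono_l htri hy q) (tri_mono_r htri y hz)
    exact le_trans (le_conv rfl) (le_sSup ⟨tri y z, hxle, rfl⟩)

lemma convL_eq (hstar : IsTnorm star) (hstarc : IsCont star)
    (htri : IsTconorm tri) (htric : IsCont tri) (f g : I → I) (x : I) :
    fL (conv star tri f g) x = conv star tri (fL f) (fL g) x := by
  apply le_antisymm
  · apply sSup_le
    rintro _ ⟨x', hx', rfl⟩
    apply conv_le
    intro y z hyz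
    obtain ⟨p, q, hpy, hqz, hpq⟩ := exists_ge_pair htri htric (le_trans (le_of_eq hyz) hx')
    calc star (f y) (g z) ≤ star (fL f p) (fL g q) :=
          le_trans (star_mono_l hstar (f_le_fL f hpy) (g z))
            (star_mono_r hstar (fL f p) (f_le_fL g hqz))
    _ ≤ conv star tri (fL f) (fL g) x := le_conv hpq
  · apply conv_le
    intro p q hpq
    have hne1 : (g '' Set.Iic q).Nonempty := ⟨g q, q, le_refl q, rfl⟩
    have hmap1 := map_sSup_of_continuous (hstar.2.2.2.1 (fL f p)) (cont_sec_r hstarc (fL f p)) hne1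
    show star (fL f p) (sSup (g '' Set.Iic q)) ≤ _
    rw [hmap1]
    apply sSup_le
    rintro _ ⟨_, ⟨z, hz, rfl⟩, rfl⟩
    have hne2 : (f '' Set.Iic p).Nonempty := ⟨f p, p, le_refl p, rfl⟩
    have hmap2 := map_sSup_of_continuous (hstar.2.2.1 (g z)) (cont_sec_l hstarc (g z)) hne2
    show star (sSup (f '' Set.Iic p)) (g z) ≤ _
    rw [hmap2]
    apply sSup_le
    rintro _ ⟨_, ⟨y, hy, rfl⟩, rfl⟩
    have hxle : tri y z ≤ x := by
      rw [← hpq]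
      exact le_trans (tri_mono_l htri hy z) (tri_mono_r htri p hz)
    exact le_trans (le_conv rfl) (le_sSup ⟨tri y z, hxle, rfl⟩)

end ConvLR

section Sqle

lemma le_fmeet {f g : I → I} {x y z : I} (h : min y z = x) :
    min (f y) (g z) ≤ fmeet f g x := le_sSup ⟨y, z, h, rfl⟩

lemma fmeet_le {f g : I → I} {x c : I}
    (h : ∀ y z : I, min y z = x → min (f y) (g z) ≤ c) : fmeet f g x ≤ c := by
  apply sSup_le
  rintro b ⟨y, z, hyz, rfl⟩
  exact h y z hyz

/-- First half of the characterization of `⊑` via `fL` and `fR`. -/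
lemma sqle_imp {g h : I → I} (hgn : IsNormal g) (hs : sqle g h) :
    (∀ x, fL h x ≤ fL g x) ∧ (∀ x, fR g x ≤ fR h x) := by
  have hpt : ∀ x, fmeet g h x = g x := fun x => congrFun hs x
  -- g ≤ fR h pointwise
  have hgfRh : ∀ x, g x ≤ fR h x := by
    intro x
    by_contra hcon
    push_neg at hcon
    have hle : fmeet g h x ≤ fR h x := by
      apply fmeet_le
      intro y z hyz
      have hxz : x ≤ z := le_of_eq_of_le hyz.symm (min_le_right y z)
      exact le_trans (min_le_right _ _) (f_le_fR h hxz)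
    rw [hpt x] at hle
    exact absurd hle (not_le.mpr hcon)
  -- min (fR g t) (h t) ≤ g t pointwise
  have hminR : ∀ t, min (fR g t) (h t) ≤ g t := by
    intro t
    by_contra hcon
    push_neg at hcon
    have h1 : g t < fR g t := lt_of_lt_of_le hcon (min_le_left _ _)
    have h2 : g t < h t := lt_of_lt_of_le hcon (min_le_right _ _)
    obtain ⟨_, ⟨y, hy, rfl⟩, hgy⟩ := lt_sSup_witness h1
    have hmem : min (g y) (h t) ≤ fmeet g h t := le_fmeet (min_eq_right hy)
    rw [hpt t] at hmem
    exact absurd hmem (not_le.mpr (lt_min hgy h2))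
  constructor
  · intro x
    apply sSup_le
    rintro _ ⟨t, ht, rfl⟩
    rcases le_total (h t) (fR g t) with hc | hc
    · have : h t ≤ g t := by
        have := hminR t
        rwa [min_eq_right hc] at this
      exact le_trans this (f_le_fL g ht)
    · have h1 : fR g t ≤ g t := by
        have := hminR t
        rwa [min_eq_left hc] at this
      rcases max_choice (fL g t) (fR g t) with hm | hm
      · have hfl : fL g t = 1 := by rw [← hm]; exact fL_sup_fR hgn t
        exact le_trans le_one' (le_trans (le_of_eq hfl.symm) (fL_mono g ht))
      · have hfr : fR g t = 1 := by rw [← hm]; exact fL_sup_fR hgn t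
        have hgt1 : g t = 1 := le_antisymm le_one' (le_trans (le_of_eq hfr.symm) h1)
        exact le_trans le_one' (le_trans (le_of_eq hgt1.symm) (f_le_fL g ht))
  · intro x
    apply sSup_le
    rintro _ ⟨t, ht, rfl⟩
    exact le_trans (hgfRh t) (fR_anti h ht)

/-- Second half of the characterization of `⊑` via `fL` and `fR`. -/
lemma sqle_of {g h : I → I} (hgc : IsConvexFn g)
    (h1 : ∀ x, fL h x ≤ fL g x) (h2 : ∀ x, fR g x ≤ fR h x) : sqle g h := by
  funext x
  apply le_antisymm
  · apply fmeet_le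
    intro y z hyz
    rcases le_total y z with hc | hc
    · have hyx : y = x := by rw [← hyz, min_eq_left hc]
      subst hyx
      exact min_le_left _ _
    · have hzx : z = x := by rw [← hyz, min_eq_right hc]
      have hxy : x ≤ y := hzx ▸ hc
      have ha : g y ≤ fR g x := f_le_fR g hxy
      have hb : h z ≤ fL g x := le_trans (f_le_fL h (le_of_eq hzx)) (h1 x)
      calc min (g y) (h z) ≤ min (fR g x) (fL g x) := min_le_min ha hb
      _ = min (fL g x) (fR g x) := min_comm _ _
      _ ≤ g x := min_fL_fR_le hgc x
  · by_contra hcon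
    push_neg at hcon
    have hz : ∀ z, x ≤ z → h z ≤ fmeet g h x := by
      intro z hxz
      have hmem : min (g x) (h z) ≤ fmeet g h x := le_fmeet (min_eq_left hxz)
      rcases le_total (g x) (h z) with hc | hc
      · rw [min_eq_left hc] at hmem
        exact absurd (lt_of_le_of_lt hmem hcon) (lt_irrefl _)
      · rwa [min_eq_right hc] at hmem
    have hfRh : fR h x ≤ fmeet g h x := by
      apply sSup_le
      rintro _ ⟨z, hz', rfl⟩
      exact hz z hz'
    have : g x ≤ fmeet g h x :=
      le_trans (f_le_fR g (le_refl x)) (le_trans (h2 x) hfRh)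
    exact absurd (lt_of_le_of_lt this hcon) (lt_irrefl _)

variable {star tri : I → I → I}

lemma conv_mono (hstar : IsTnorm star) (hstarc : IsCont star)
    (htri : IsTconorm tri) (htric : IsCont tri)
    {f g h : I → I} (hf : InL f) (hg : InL g) (hh : InL h) (hs : sqle g h) :
    sqle (conv star tri f g) (conv star tri f h) := by
  obtain ⟨hLle, hRle⟩ := sqle_imp hg.1 hs
  apply sqle_of (conv_convex hstar htri htric hf.2 hg.2)
  · intro x
    rw [convL_eq hstar hstarc htri htric, convL_eq hstar hstarc htri htric]
    apply conv_le
    intro y z hyz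
    exact le_trans (star_mono_r hstar (fL f y) (hLle z)) (le_conv hyz)
  · intro x
    rw [convR_eq hstar hstarc htri htric, convR_eq hstar hstarc htri htric]
    apply conv_le
    intro y z hyz
    exact le_trans (star_mono_r hstar (fR f y) (hRle z)) (le_conv hyz)

end Sqle

section Chi

variable {star tri : I → I → I}

lemma chi_self (a : I) : chi a a = 1 := by simp [chi]

lemma chi_ne {a t : I} (h : t ≠ a) : chi a t = 0 := by simp [chi, h]

lemma chi_inL (a : I) : InL (chi a) := by
  constructor
  · exact le_antisymm le_one' (le_sSup ⟨a, chi_self a⟩)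
  · intro x y z hxy hyz
    by_cases hx : x = a
    · by_cases hz : z = a
      · have hy : y = a := le_antisymm (hz ▸ hyz) (hx ▸ hxy)
        rw [hy, chi_self]
        exact le_one'
      · rw [chi_ne hz]
        exact le_trans (min_le_right _ _) bot_le
    · rw [chi_ne hx]
      exact le_trans (min_le_left _ _) bot_le

lemma chi_inj {a b : I} (h : chi a = chi b) : a = b := by
  by_contra hab
  have h1 := congrFun h a
  rw [chi_self, chi_ne (fun hba => hab hba)] at h1
  exact one_ne_zero (congrArg Subtype.val h1)

lemma conv_chi_chi (hstar : IsTnorm star) (a b : I) :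
    conv star tri (chi a) (chi b) = chi (tri a b) := by
  funext x
  apply le_antisymm
  · apply conv_le
    intro y z hyz
    by_cases hy : y = a
    · by_cases hz : z = b
      · subst hy; subst hz; subst hyz
        rw [chi_self, chi_self, my_star_one hstar, chi_self]
      · rw [chi_ne hz, my_star_zero hstar]
        exact bot_le
    · rw [chi_ne hy, zero_star hstar]
      exact bot_le
  · by_cases hx : x = tri a b
    · subst hx
      rw [chi_self]
      exact le_sSup ⟨a, b, rfl, by rw [chi_self, chi_self, my_star_one hstar]⟩
    · rw [chi_ne hx]
      exact bot_le

lemma fmeet_chi_chi (a b : I) : fmeet (chi a) (chi b) = chi (min a b) := by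
  funext x
  apply le_antisymm
  · apply fmeet_le
    intro y z hyz
    by_cases hy : y = a
    · by_cases hz : z = b
      · have hx : min a b = x := by rw [← hy, ← hz]; exact hyz
        rw [hy, hz, chi_self a, chi_self b, min_self, ← hx, chi_self (min a b)]
      · rw [chi_ne hz]
        exact le_trans (min_le_right _ _) bot_le
    · rw [chi_ne hy]
      exact le_trans (min_le_left _ _) bot_le
  · by_cases hx : x = min a b
    · subst hx
      rw [chi_self]
      exact le_sSup ⟨a, b, rfl, by rw [chi_self, chi_self, min_self]⟩
    · rw [chi_ne hx]
      exact bot_le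

lemma sqle_chi {a b : I} : sqle (chi a) (chi b) ↔ a ≤ b := by
  unfold sqle
  rw [fmeet_chi_chi]
  constructor
  · intro h
    exact min_eq_left_iff.mp (chi_inj h)
  · intro h
    rw [min_eq_left h]

end Chi

theorem stmt_19 (star tri : I → I → I) (hstar : IsTnorm star) (hstarc : IsCont star)
    (htric : IsCont tri) :
    IsTconorm tri ↔ IsTconormOnL (conv star tri) := by
  constructor
  · intro htri
    exact ⟨fun f g hf hg => conv_inL hstar hstarc htri htric hf hg,
           fun f g _ _ => conv_comm hstar htri.1 f g,
           fun f g h _ _ _ => conv_assoc hstar hstarc htri htric f g h,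
           fun f _ => conv_chi_zero hstar htri f,
           fun f g h hf hg hh hs => conv_mono hstar hstarc htri htric hf hg hh hs⟩
  · rintro ⟨hcl, hcomm, hassoc, hneut, hmono⟩
    have tcomm : ∀ x y : I, tri x y = tri y x := by
      intro x y
      apply chi_inj
      rw [← conv_chi_chi hstar x y, ← conv_chi_chi hstar y x,
        hcomm (chi x) (chi y) (chi_inL x) (chi_inL y)]
    have tneut : ∀ x : I, tri x 0 = x := by
      intro x
      apply chi_inj
      rw [← conv_chi_chi hstar x 0]
      exact hneut (chi x) (chi_inL x)
    have tneut0 : ∀ x : I, tri 0 x = x := fun x => (tcomm 0 x).trans (tneut x)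
    have tassoc : ∀ x y z : I, tri (tri x y) z = tri x (tri y z) := by
      intro x y z
      apply chi_inj
      rw [← conv_chi_chi hstar (tri x y) z, ← conv_chi_chi hstar x y,
        ← conv_chi_chi hstar x (tri y z), ← conv_chi_chi hstar y z]
      exact hassoc (chi x) (chi y) (chi z) (chi_inL x) (chi_inL y) (chi_inL z)
    have tmono2 : ∀ x : I, Monotone fun y => tri x y := by
      intro x a b hab
      have h2 := hmono (chi x) (chi a) (chi b) (chi_inL x) (chi_inL a) (chi_inL b)
        (sqle_chi.mpr hab)
      rw [conv_chi_chi hstar, conv_chi_chi hstar] at h2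
      exact sqle_chi.mp h2
    have tmono1 : ∀ y : I, Monotone fun x => tri x y := by
      intro y a b hab
      show tri a y ≤ tri b y
      rw [tcomm a y, tcomm b y]
      exact tmono2 y hab
    exact ⟨tcomm, tassoc, tmono1, tmono2, tneut0, tneut⟩
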